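/- Let u_1, …, u_m be reals (correct values), μ the median of a sequence containing them plus at most q ≤ ⌈n/2⌉ - 1 Byzantine values (n = m + q), and ρ the mean of the n - q entries nearest to μ. Fix g ∈ ℝ. Then (ρ - g)² ≤ 10 · max_i (u_i - g)². -/

import Mathlib

/-- The element at sorted position `k` of the sequence `s` (0 if out of range). -/
noncomputable def seqSorted {n : ℕ} (s : Fin n → ℝ) (k : ℕ) : ℝ :=
  if h : k < n then s (Tuple.sort s ⟨k, h⟩) else 0

/-- The median of `s : Fin n → ℝ` (rank `⌊(n-1)/2⌋` in the sorted order). -/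
noncomputable def seqMedian {n : ℕ} (s : Fin n → ℝ) : ℝ :=
  seqSorted s ((n - 1) / 2)

/-!
Let `M = maxᵢ |uᵢ - g|`. Fewer than half of the entries are Byzantine, so correct values lie
on both sides of the median `μ`, whence `|μ - g| ≤ M`. The `m` entries nearest to `μ` are, by
pigeonhole, each no farther from `μ` than some correct value, hence within `2M` of `μ`; so is
their mean `ρ`. Thus `|ρ - g| ≤ 3M` and `(ρ - g)² ≤ 9M² ≤ 10M²`.
-/

open Finset

section OrderStatistics

variable {n : ℕ} (s : Fin n → ℝ) {k : ℕ}

lemma seqSorted_of_lt (hk : k < n) : seqSorted s k = s (Tuple.sort s ⟨k, hk⟩) :=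
  dif_pos hk

lemma card_filter_le_seqSorted (hk : k < n) : k + 1 ≤ #{i | s i ≤ seqSorted s k} := by
  rw [← Fin.card_Iic ⟨k, hk⟩]
  refine card_le_card_of_injOn (Tuple.sort s) (fun j hj => ?_) (Tuple.sort s).injective.injOn
  simp only [coe_filter, mem_univ, true_and, Set.mem_ofPred_eq, seqSorted_of_lt s hk]
  exact Tuple.monotone_sort s (mem_Iic.mp hj)

lemma card_filter_seqSorted_le (hk : k < n) : n - k ≤ #{i | seqSorted s k ≤ s i} := by
  rw [← Fin.card_Ici ⟨k, hk⟩]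
  refine card_le_card_of_injOn (Tuple.sort s) (fun j hj => ?_) (Tuple.sort s).injective.injOn
  simp only [coe_filter, mem_univ, true_and, Set.mem_ofPred_eq, seqSorted_of_lt s hk]
  exact Tuple.monotone_sort s (mem_Ici.mp hj)

end OrderStatistics

section Pigeonhole

variable {α β : Type*} [Fintype α] [DecidableEq β] {ι : α → β}

lemma exists_apply_mem_of_card_sub_lt [Fintype β] (hι : ι.Injective) {A : Finset β}
    (hA : Fintype.card β - Fintype.card α < #A) : ∃ a, ι a ∈ A := by
  by_contra! h
  have hsub : A ⊆ (univ.image ι)ᶜ := fun b hb => mem_compl.mpr fun hbι => by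
    obtain ⟨a, -, rfl⟩ := mem_image.mp hbι
    exact h a hb
  have := card_le_card hsub
  rw [card_compl, card_image_of_injective _ hι, card_univ] at this
  omega

lemma exists_le_apply_of_mem_of_forall_le {γ : Type*} [Preorder γ] (hι : ι.Injective)
    (f : β → γ) {W : Finset β} (hW : #W ≤ Fintype.card α)
    (hsel : ∀ i ∈ W, ∀ j ∉ W, f i ≤ f j) {i : β} (hi : i ∈ W) : ∃ a, f i ≤ f (ι a) := by
  by_cases hrange : ∀ a, ι a ∈ W
  · have hsub : univ.image ι ⊆ W := fun b hb => by
      obtain ⟨a, -, rfl⟩ := mem_image.mp hb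
      exact hrange a
    have heq := eq_of_subset_of_card_le hsub (by rwa [card_image_of_injective _ hι, card_univ])
    obtain ⟨a, -, rfl⟩ := mem_image.mp (heq ▸ hi)
    exact ⟨a, le_rfl⟩
  · obtain ⟨a, ha⟩ := not_forall.mp hrange
    exact ⟨a, hsel i hi _ ha⟩

end Pigeonhole

lemma abs_sum_div_card_sub_le {β : Type*} {W : Finset β} (hW : W.Nonempty) {s : β → ℝ}
    {c r : ℝ} (h : ∀ i ∈ W, |s i - c| ≤ r) : |(∑ i ∈ W, s i) / #W - c| ≤ r := by
  have hcard : (0 : ℝ) < #W := by exact_mod_cast hW.card_pos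
  have hmean : (∑ i ∈ W, s i) / #W - c = (∑ i ∈ W, (s i - c)) / #W := by
    rw [sum_sub_distrib, sum_const, nsmul_eq_mul]
    field_simp
  rw [hmean, abs_div, abs_of_pos hcard, div_le_iff₀ hcard]
  calc |∑ i ∈ W, (s i - c)| ≤ ∑ i ∈ W, |s i - c| := abs_sum_le_sum_abs _ _
    _ ≤ ∑ _i ∈ W, r := sum_le_sum h
    _ = r * #W := by rw [sum_const, nsmul_eq_mul, mul_comm]

section RobustMean

variable {m n : ℕ} {s : Fin n → ℝ} {ι : Fin m → Fin n} {g r : ℝ}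

lemma abs_seqMedian_sub_le (hm : 0 < m) (hι : ι.Injective) (hmed : n - m ≤ (n - 1) / 2)
    (hr : ∀ j, |s (ι j) - g| ≤ r) : |seqMedian s - g| ≤ r := by
  have hmn := Fintype.card_le_of_injective ι hι
  simp only [Fintype.card_fin] at hmn
  have hk : (n - 1) / 2 < n := by omega
  obtain ⟨a, ha⟩ := exists_apply_mem_of_card_sub_lt hι
    (lt_of_lt_of_le (by simp only [Fintype.card_fin]; omega) (card_filter_le_seqSorted s hk))
  obtain ⟨b, hb⟩ := exists_apply_mem_of_card_sub_lt hι
    (lt_of_lt_of_le (by simp only [Fintype.card_fin]; omega) (card_filter_seqSorted_le s hk))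
  simp only [mem_filter, mem_univ, true_and] at ha hb
  have ha' := abs_le.mp (hr a)
  have hb' := abs_le.mp (hr b)
  rw [seqMedian, abs_le]
  constructor <;> linarith

theorem abs_trimmedMean_sub_le (hm : 0 < m) (hι : ι.Injective) (hmed : n - m ≤ (n - 1) / 2)
    {W : Finset (Fin n)} (hW : #W = m)
    (hsel : ∀ i ∈ W, ∀ j ∉ W, |s i - seqMedian s| ≤ |s j - seqMedian s|)
    (hr : ∀ j, |s (ι j) - g| ≤ r) : |(∑ i ∈ W, s i) / #W - g| ≤ 3 * r := by
  set μ := seqMedian s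
  have hμ : |μ - g| ≤ r := abs_seqMedian_sub_le hm hι hmed hr
  have hnear : ∀ i ∈ W, |s i - μ| ≤ 2 * r := fun i hi => by
    obtain ⟨j, hj⟩ := exists_le_apply_of_mem_of_forall_le hι (fun i => |s i - μ|)
      (by simp [hW]) hsel hi
    calc |s i - μ| ≤ |s (ι j) - μ| := hj
      _ ≤ |s (ι j) - g| + |g - μ| := abs_sub_le _ _ _
      _ ≤ 2 * r := by rw [abs_sub_comm g]; linarith [hr j]
  have hW₀ : W.Nonempty := card_pos.mp (hW ▸ hm)
  calc |(∑ i ∈ W, s i) / #W - g| ≤ |(∑ i ∈ W, s i) / #W - μ| + |μ - g| := abs_sub_le _ _ _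
    _ ≤ 2 * r + r := add_le_add (abs_sum_div_card_sub_le hW₀ hnear) hμ
    _ = 3 * r := by ring

end RobustMean

theorem stmt7_general {n q m : ℕ} (hm : 0 < m) (hnm : n = m + q)
    (hq : q ≤ (n + 1) / 2 - 1)
    (u : Fin m → ℝ) (s : Fin n → ℝ)
    (ι : Fin m → Fin n) (hι : Function.Injective ι) (hsu : ∀ i, s (ι i) = u i)
    (W : Finset (Fin n)) (hWcard : W.card = n - q)
    (hWsel : ∀ i ∈ W, ∀ j, j ∉ W → |s i - seqMedian s| ≤ |s j - seqMedian s|)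
    (g : ℝ) :
    ((∑ i ∈ W, s i) / ((n : ℝ) - (q : ℝ)) - g) ^ 2 ≤
      10 * Finset.univ.sup'
        (Finset.univ_nonempty_iff.mpr (Fin.pos_iff_nonempty.mp hm))
        (fun i => (u i - g) ^ 2) := by
  set S := univ.sup' (univ_nonempty_iff.mpr (Fin.pos_iff_nonempty.mp hm)) (fun i => (u i - g) ^ 2)
  have hS : ∀ j, (u j - g) ^ 2 ≤ S := fun j => le_sup' (fun i => (u i - g) ^ 2) (mem_univ j)
  have hW : #W = m := by omega
  have hden : (n : ℝ) - q = #W := by rw [hW, hnm]; push_cast; ring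
  have hr : ∀ j, |s (ι j) - g| ≤ √S := fun j => by
    rw [hsu, ← Real.sqrt_sq_eq_abs]
    exact Real.sqrt_le_sqrt (hS j)
  have hρ := abs_trimmedMean_sub_le hm hι (by omega) hW hWsel hr
  have hS₀ : 0 ≤ S := (sq_nonneg _).trans (hS ⟨0, hm⟩)
  rw [hden, ← sq_abs]
  calc |(∑ i ∈ W, s i) / #W - g| ^ 2 ≤ (3 * √S) ^ 2 := pow_le_pow_left₀ (abs_nonneg _) hρ 2
    _ = 9 * S := by rw [mul_pow, Real.sq_sqrt hS₀]; norm_num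
    _ ≤ 10 * S := by linarith

/-- with correct values `u₁, …, u_m` embedded in a sequence `s` of
length `n = m + q`, `q ≤ ⌈n/2⌉ - 1`, `μ` the median of `s`, and `ρ` the mean of
the `n - q` entries nearest to `μ`, we have `(ρ - g)² ≤ 10·max_i (u_i - g)²`. -/
theorem stmt7 {n q m : ℕ} (hn : 0 < n) (hm : 0 < m) (hnm : n = m + q)
    (hq : q ≤ (n + 1) / 2 - 1)
    (u : Fin m → ℝ) (s : Fin n → ℝ)
    (ι : Fin m → Fin n) (hι : Function.Injective ι) (hsu : ∀ i, s (ι i) = u i)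
    (W : Finset (Fin n)) (hWcard : W.card = n - q)
    (hWsel : ∀ i ∈ W, ∀ j, j ∉ W → |s i - seqMedian s| ≤ |s j - seqMedian s|)
    (g : ℝ) :
    ((∑ i ∈ W, s i) / ((n : ℝ) - (q : ℝ)) - g) ^ 2 ≤
      10 * Finset.univ.sup'
        (Finset.univ_nonempty_iff.mpr (Fin.pos_iff_nonempty.mp hm))
        (fun i => (u i - g) ^ 2) :=
  stmt7_general hm hnm hq u s ι hι hsu W hWcard hWsel g
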